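/- Let cl be a maximal exceptional sequence in Z^r, fix ν, and let B ⊂ Z be a segment, i.e., a maximal run of consecutive integers b with L_b ≠ ∅. Then ℓ_{min(B)} ≤ ℓ_{min(B)+1} and ℓ_{max(B)} ≤ ℓ_{max(B)-1}, where ℓ_c = |L_c|. In particular, every segment has length at least 2. -/

import Mathlib

def IsExceptional {r m : ℕ} (cl : Fin m → (Fin r → ℤ)) : Prop :=
  ∀ i j : Fin m, i < j → ∃ ν : Fin r, cl j ν - cl i ν = 1

def layerCard {r m : ℕ} (cl : Fin m → (Fin r → ℤ)) (ν : Fin r) (c : ℤ) : ℕ :=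
  (Finset.univ.filter fun i => cl i ν = c).card

/-!
Reduce the points modulo 2. For `i < j` some coordinate of `cl j - cl i` equals `1`, so the
parity vectors of distinct points differ, and as there are `2 ^ r` points they realise every
parity vector exactly once. Flipping the `ν`-th parity of `cl i` therefore gives a point
`cl (f i)`, with `f` injective, whose coordinates have the parities of those of `cl i` except at
`ν`; the exceptional condition between `i` and `f i` can then only be witnessed at `ν`, so
`cl (f i) ν = cl i ν ± 1`. Hence `f` maps the
bottom layer of a segment injectively into the next one, the top layer into the previous one,
and a segment of length one would have nowhere to go.
-/

section Parity

variable {ι : Type*}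

def parity (x : ι → ℤ) : ι → ZMod 2 := fun μ => (x μ : ZMod 2)

lemma parity_apply_ne_of_sub_eq_one {x y : ι → ℤ} {μ : ι} (h : x μ - y μ = 1) :
    parity x μ ≠ parity y μ := by
  intro hxy
  have : ((x μ - y μ : ℤ) : ZMod 2) = 0 := by
    push_cast
    exact sub_eq_zero.mpr hxy
  rw [h] at this
  exact one_ne_zero this

lemma eq_of_parity_eq_add_single [DecidableEq ι] {x y : ι → ℤ} {ν μ : ι}
    (hpar : parity x = parity y + Pi.single ν 1) (h : x μ - y μ = 1 ∨ y μ - x μ = 1) :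
    μ = ν := by
  by_contra hμ
  have hxy : parity x μ = parity y μ := by
    simp [hpar, Pi.single_eq_of_ne hμ]
  rcases h with h | h
  · exact parity_apply_ne_of_sub_eq_one h hxy
  · exact parity_apply_ne_of_sub_eq_one h hxy.symm

end Parity

namespace IsExceptional

variable {r m : ℕ} {cl : Fin m → Fin r → ℤ}

lemma parity_injective (h : IsExceptional cl) : Function.Injective (parity ∘ cl) := by
  intro i j hij
  by_contra hne
  rcases lt_or_gt_of_ne hne with hlt | hlt
  · obtain ⟨μ, hμ⟩ := h i j hlt
    exact parity_apply_ne_of_sub_eq_one hμ (congrFun hij μ).symm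
  · obtain ⟨μ, hμ⟩ := h j i hlt
    exact parity_apply_ne_of_sub_eq_one hμ (congrFun hij μ)

lemma parity_bijective {cl : Fin (2 ^ r) → Fin r → ℤ} (h : IsExceptional cl) :
    Function.Bijective (parity ∘ cl) :=
  (Fintype.bijective_iff_injective_and_card _).mpr ⟨h.parity_injective, by simp [ZMod.card]⟩

lemma exists_parity_flip {cl : Fin (2 ^ r) → Fin r → ℤ} (h : IsExceptional cl) (ν : Fin r)
    (i : Fin (2 ^ r)) :
    ∃ j, parity (cl j) = parity (cl i) + Pi.single ν 1 ∧
      (cl j ν = cl i ν + 1 ∨ cl j ν = cl i ν - 1) := by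
  obtain ⟨j, hj⟩ := h.parity_bijective.surjective (parity (cl i) + Pi.single ν 1)
  have hpar : parity (cl j) = parity (cl i) + Pi.single ν 1 := hj
  refine ⟨j, hpar, ?_⟩
  have hne : j ≠ i := by
    rintro rfl
    have := congrFun hpar ν
    simp at this
  rcases lt_or_gt_of_ne hne with hlt | hlt
  · obtain ⟨μ, hμ⟩ := h j i hlt
    obtain rfl := eq_of_parity_eq_add_single hpar (Or.inr hμ)
    right; omega
  · obtain ⟨μ, hμ⟩ := h i j hlt
    obtain rfl := eq_of_parity_eq_add_single hpar (Or.inl hμ)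
    left; omega

lemma exists_injective_step {cl : Fin (2 ^ r) → Fin r → ℤ} (h : IsExceptional cl) (ν : Fin r) :
    ∃ f : Fin (2 ^ r) → Fin (2 ^ r), Function.Injective f ∧
      ∀ i, cl (f i) ν = cl i ν + 1 ∨ cl (f i) ν = cl i ν - 1 := by
  choose f hpar hstep using h.exists_parity_flip ν
  refine ⟨f, fun i j hij => h.parity_injective ?_, hstep⟩
  have := hpar i
  rw [hij, hpar j] at this
  exact (add_right_cancel this).symm

end IsExceptional

section Layers

variable {r m : ℕ} {cl : Fin m → Fin r → ℤ} {ν : Fin r} {c : ℤ}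

lemma layerCard_eq_zero_iff : layerCard cl ν c = 0 ↔ ∀ i, cl i ν ≠ c := by
  simp [layerCard, Finset.filter_eq_empty_iff]

lemma layerCard_le_of_injective {f : Fin m → Fin m} (hf : Function.Injective f) {d : ℤ}
    (hmaps : ∀ i, cl i ν = c → cl (f i) ν = d) : layerCard cl ν c ≤ layerCard cl ν d :=
  Finset.card_le_card_of_injOn f (fun i hi => by simp_all) hf.injOn

lemma IsExceptional.layerCard_le_succ {cl : Fin (2 ^ r) → Fin r → ℤ} (h : IsExceptional cl)
    (hc : layerCard cl ν (c - 1) = 0) : layerCard cl ν c ≤ layerCard cl ν (c + 1) := by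
  obtain ⟨f, hf, hstep⟩ := h.exists_injective_step ν
  refine layerCard_le_of_injective hf fun i hi => ?_
  rcases hstep i with hup | hdown
  · omega
  · exact absurd (by omega) (layerCard_eq_zero_iff.mp hc (f i))

lemma IsExceptional.layerCard_le_pred {cl : Fin (2 ^ r) → Fin r → ℤ} (h : IsExceptional cl)
    (hc : layerCard cl ν (c + 1) = 0) : layerCard cl ν c ≤ layerCard cl ν (c - 1) := by
  obtain ⟨f, hf, hstep⟩ := h.exists_injective_step ν
  refine layerCard_le_of_injective hf fun i hi => ?_
  rcases hstep i with hup | hdown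
  · exact absurd (by omega) (layerCard_eq_zero_iff.mp hc (f i))
  · omega

lemma IsExceptional.layerCard_eq_zero_of_neighbors {cl : Fin (2 ^ r) → Fin r → ℤ}
    (h : IsExceptional cl) (hpred : layerCard cl ν (c - 1) = 0)
    (hsucc : layerCard cl ν (c + 1) = 0) : layerCard cl ν c = 0 :=
  Nat.eq_zero_of_le_zero (hsucc ▸ h.layerCard_le_succ hpred)

end Layers

theorem stmt_10 {r : ℕ} (cl : Fin (2 ^ r) → (Fin r → ℤ)) (h : IsExceptional cl)
    (ν : Fin r) (lo hi : ℤ) (hle : lo ≤ hi)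
    (hseg : ∀ c : ℤ, lo ≤ c → c ≤ hi → layerCard cl ν c ≠ 0)
    (hlo : layerCard cl ν (lo - 1) = 0) (hhi : layerCard cl ν (hi + 1) = 0) :
    layerCard cl ν lo ≤ layerCard cl ν (lo + 1) ∧
    layerCard cl ν hi ≤ layerCard cl ν (hi - 1) ∧
    lo + 1 ≤ hi := by
  refine ⟨h.layerCard_le_succ hlo, h.layerCard_le_pred hhi, ?_⟩
  by_contra hshort
  obtain rfl : lo = hi := by omega
  exact hseg lo le_rfl le_rfl (h.layerCard_eq_zero_of_neighbors hlo hhi)
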